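/- arXiv:1804.01882 — 2 statements merged into one kernel-verified Lean document; each statement's English description precedes it below -/
import Mathlib

section
/- In hyperbolic trigonometry (hyperboloid model), for a geodesic triangle with vertices A, B, C, side lengths a = d(B,C), b = d(A,C), c = d(A,B), and angle ∠B at B, the law of cosines holds: cos(∠B) = (cosh(a)·cosh(c) − cosh(b))/(sinh(a)·sinh(c)). -/
open scoped RealInnerProductSpace

noncomputable def arcosh (x : ℝ) : ℝ := Real.log (x + Real.sqrt (x ^ 2 - 1))

/-- The Minkowski bilinear form on ℝ × ℝⁿ. -/
noncomputable def mink {n : ℕ} (x y : ℝ × EuclideanSpace ℝ (Fin n)) : ℝ :=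
  -(x.1 * y.1) + ⟪x.2, y.2⟫

/-- The hyperboloid model ℍⁿ. -/
def hyperboloid (n : ℕ) : Set (ℝ × EuclideanSpace ℝ (Fin n)) :=
  {p | mink p p = -1 ∧ 0 < p.1}

/-- The intrinsic distance of the hyperboloid model. -/
noncomputable def hypDist {n : ℕ} (x y : ℝ × EuclideanSpace ℝ (Fin n)) : ℝ :=
  arcosh (-(mink x y))

/-- The initial unit tangent vector at `B` of the geodesic from `B` to `A`. -/
noncomputable def tangentDir {n : ℕ} (B A : ℝ × EuclideanSpace ℝ (Fin n)) :
    ℝ × EuclideanSpace ℝ (Fin n) :=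
  (Real.sinh (hypDist B A))⁻¹ • (A + (mink A B) • B)

/-- The Riemannian angle at `B` between the geodesics towards `A` and towards `C`. -/
noncomputable def hypAngle {n : ℕ} (B A C : ℝ × EuclideanSpace ℝ (Fin n)) : ℝ :=
  Real.arccos (mink (tangentDir B A) (tangentDir B C))


lemma mink_comm {n : ℕ} (x y : ℝ × EuclideanSpace ℝ (Fin n)) : mink x y = mink y x := by
  simp [mink, real_inner_comm, mul_comm]

lemma mink_add_left {n : ℕ} (x y z : ℝ × EuclideanSpace ℝ (Fin n)) :
    mink (x + y) z = mink x z + mink y z := by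
  simp [mink, inner_add_left]; ring

lemma mink_smul_left {n : ℕ} (r : ℝ) (x z : ℝ × EuclideanSpace ℝ (Fin n)) :
    mink (r • x) z = r * mink x z := by
  simp [mink, inner_smul_left]; ring

lemma mink_add_right {n : ℕ} (x y z : ℝ × EuclideanSpace ℝ (Fin n)) :
    mink x (y + z) = mink x y + mink x z := by
  rw [mink_comm, mink_add_left, mink_comm y x, mink_comm z x]

lemma mink_smul_right {n : ℕ} (r : ℝ) (x z : ℝ × EuclideanSpace ℝ (Fin n)) :
    mink x (r • z) = r * mink x z := by
  rw [mink_comm, mink_smul_left, mink_comm z x]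

lemma cosh_arcosh {x : ℝ} (hx : 1 ≤ x) : Real.cosh (arcosh x) = x := by
  have hs : Real.sqrt (x ^ 2 - 1) ^ 2 = x ^ 2 - 1 := Real.sq_sqrt (by nlinarith)
  have hs0 : 0 ≤ Real.sqrt (x ^ 2 - 1) := Real.sqrt_nonneg _
  have hpos : 0 < x + Real.sqrt (x ^ 2 - 1) := by nlinarith
  rw [arcosh, Real.cosh_eq, Real.exp_neg, Real.exp_log hpos]
  field_simp
  nlinarith

lemma sinh_arcosh {x : ℝ} (hx : 1 ≤ x) : Real.sinh (arcosh x) = Real.sqrt (x ^ 2 - 1) := by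
  have hs : Real.sqrt (x ^ 2 - 1) ^ 2 = x ^ 2 - 1 := Real.sq_sqrt (by nlinarith)
  have hs0 : 0 ≤ Real.sqrt (x ^ 2 - 1) := Real.sqrt_nonneg _
  have hpos : 0 < x + Real.sqrt (x ^ 2 - 1) := by nlinarith
  rw [arcosh, Real.sinh_eq, Real.exp_neg, Real.exp_log hpos]
  field_simp
  nlinarith

lemma one_lt_neg_mink {n : ℕ} {x y : ℝ × EuclideanSpace ℝ (Fin n)}
    (hx : x ∈ hyperboloid n) (hy : y ∈ hyperboloid n) (hxy : x ≠ y) :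
    1 < -(mink x y) := by
  obtain ⟨hx1, hx2⟩ := hx
  obtain ⟨hy1, hy2⟩ := hy
  simp only [mink] at hx1 hy1 ⊢
  have cs : ⟪x.2, y.2⟫ ≤ ‖x.2‖ * ‖y.2‖ := real_inner_le_norm _ _
  have hnx : ⟪x.2, x.2⟫ = ‖x.2‖ ^ 2 := real_inner_self_eq_norm_sq _
  have hny : ⟪y.2, y.2⟫ = ‖y.2‖ ^ 2 := real_inner_self_eq_norm_sq _
  have hxx : x.1 ^ 2 = 1 + ‖x.2‖ ^ 2 := by nlinarith
  have hyy : y.1 ^ 2 = 1 + ‖y.2‖ ^ 2 := by nlinarith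
  have key : 1 + ‖x.2‖ * ‖y.2‖ ≤ x.1 * y.1 := by
    nlinarith [sq_nonneg (‖x.2‖ - ‖y.2‖), sq_nonneg (x.1 * y.1 + (1 + ‖x.2‖ * ‖y.2‖)),
      mul_pos hx2 hy2, norm_nonneg x.2, norm_nonneg y.2]
  rcases lt_or_eq_of_le (cs.trans (by linarith) : ⟪x.2, y.2⟫ ≤ x.1 * y.1 - 1) with h | h
  · linarith
  · -- equality case: derive x = y, contradiction
    exfalso
    have h1 : ⟪x.2, y.2⟫ = ‖x.2‖ * ‖y.2‖ := le_antisymm cs (by linarith)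
    have h2 : x.1 * y.1 = 1 + ‖x.2‖ * ‖y.2‖ := by linarith
    have h2sq : (x.1 * y.1) ^ 2 = (1 + ‖x.2‖ * ‖y.2‖) ^ 2 := by rw [h2]
    have hprod : x.1 ^ 2 * y.1 ^ 2 = (1 + ‖x.2‖ ^ 2) * (1 + ‖y.2‖ ^ 2) := by rw [hxx, hyy]
    have h3 : ‖x.2‖ = ‖y.2‖ := by
      have h0 : (‖x.2‖ - ‖y.2‖) ^ 2 = 0 := by linear_combination h2sq - hprod
      have := sq_eq_zero_iff.mp h0
      linarith
    have h4 : x.2 = y.2 := by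
      have hn0 : ‖x.2 - y.2‖ ^ 2 = 0 := by
        rw [norm_sub_sq_real, h1, h3]; ring
      have := sq_eq_zero_iff.mp hn0
      rw [norm_eq_zero] at this
      exact sub_eq_zero.mp this
    have h5 : x.1 = y.1 := by
      have : x.1 ^ 2 = y.1 ^ 2 := by rw [hxx, hyy, h3]
      nlinarith
    exact hxy (Prod.ext h5 h4)

lemma mink_nonneg_of_orth {n : ℕ} {B u : ℝ × EuclideanSpace ℝ (Fin n)}
    (hB : B ∈ hyperboloid n) (h : mink B u = 0) : 0 ≤ mink u u := by
  obtain ⟨hB1, hB2⟩ := hB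
  simp only [mink] at hB1 h ⊢
  have cs := real_inner_mul_inner_self_le B.2 u.2
  have h1 : (0:ℝ) ≤ ⟪u.2, u.2⟫ := real_inner_self_nonneg
  have h2 : (B.1 * u.1) ^ 2 = ⟪B.2, u.2⟫ * ⟪B.2, u.2⟫ := by
    linear_combination (-(B.1 * u.1) - ⟪B.2, u.2⟫) * h
  nlinarith [mul_pos hB2 hB2, sq_nonneg u.1]

lemma mink_cs {n : ℕ} {B u v : ℝ × EuclideanSpace ℝ (Fin n)} (hB : B ∈ hyperboloid n)
    (o1 : mink B u = 0) (o2 : mink B v = 0) (u1 : mink u u = 1) (u2 : mink v v = 1) :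
    (mink u v) ^ 2 ≤ 1 := by
  have hsym : mink v u = mink u v := mink_comm v u
  have horth : mink B (u + (-(mink u v)) • v) = 0 := by
    rw [mink_add_right, mink_smul_right, o1, o2]; ring
  have hbound := mink_nonneg_of_orth hB horth
  rw [mink_add_left, mink_add_right, mink_add_right, mink_smul_left, mink_smul_left,
    mink_smul_right, mink_smul_right, u1, u2, hsym] at hbound
  nlinarith

lemma tangent_orth {n : ℕ} (A B : ℝ × EuclideanSpace ℝ (Fin n)) (hBm : mink B B = -1) :
    mink B (tangentDir B A) = 0 := by
  simp only [tangentDir, mink_smul_right, mink_add_right, hBm, mink_comm B A]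
  ring

lemma tangent_prod {n : ℕ} (A B C : ℝ × EuclideanSpace ℝ (Fin n))
    (hBm : mink B B = -1) (hCB : mink C B = mink B C)
    (hscne : Real.sinh (hypDist B A) ≠ 0) (hsane : Real.sinh (hypDist B C) ≠ 0) :
    mink (tangentDir B A) (tangentDir B C) *
      (Real.sinh (hypDist B A) * Real.sinh (hypDist B C)) =
      mink A C + mink A B * mink B C := by
  simp only [tangentDir, mink_smul_left, mink_smul_right, mink_add_left, mink_add_right,
    hBm, hCB]
  field_simp
  ring

theorem hyperbolic_law_of_cosines {n : ℕ}
    (A B C : ℝ × EuclideanSpace ℝ (Fin n))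
    (hA : A ∈ hyperboloid n) (hB : B ∈ hyperboloid n) (hC : C ∈ hyperboloid n)
    (hAB : A ≠ B) (hBC : B ≠ C) (hAC : A ≠ C) :
    Real.cos (hypAngle B A C) =
      (Real.cosh (hypDist B C) * Real.cosh (hypDist A B) - Real.cosh (hypDist A C)) /
        (Real.sinh (hypDist B C) * Real.sinh (hypDist A B)) := by
  have hm := one_lt_neg_mink hA hB hAB
  have hp := one_lt_neg_mink hB hC hBC
  have hq := one_lt_neg_mink hA hC hAC
  have hAm : mink A A = -1 := hA.1
  have hBm : mink B B = -1 := hB.1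
  have hCm : mink C C = -1 := hC.1
  have hBA : mink B A = mink A B := mink_comm B A
  have hCB : mink C B = mink B C := mink_comm C B
  have hdAB : Real.sinh (hypDist A B) = Real.sinh (hypDist B A) := by
    rw [hypDist, hypDist, hBA]
  have hcoshc : Real.cosh (hypDist A B) = -(mink A B) := by
    rw [hypDist]; exact cosh_arcosh (le_of_lt hm)
  have hcosha : Real.cosh (hypDist B C) = -(mink B C) := by
    rw [hypDist]; exact cosh_arcosh (le_of_lt hp)
  have hcoshb : Real.cosh (hypDist A C) = -(mink A C) := by
    rw [hypDist]; exact cosh_arcosh (le_of_lt hq)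
  have hscv : Real.sinh (hypDist B A) = Real.sqrt ((-(mink A B)) ^ 2 - 1) := by
    rw [hypDist, hBA]; exact sinh_arcosh (le_of_lt hm)
  have hsav : Real.sinh (hypDist B C) = Real.sqrt ((-(mink B C)) ^ 2 - 1) := by
    rw [hypDist]; exact sinh_arcosh (le_of_lt hp)
  have hscpos : 0 < Real.sinh (hypDist B A) := by
    rw [hscv]; apply Real.sqrt_pos.mpr; nlinarith
  have hsapos : 0 < Real.sinh (hypDist B C) := by
    rw [hsav]; apply Real.sqrt_pos.mpr; nlinarith
  have hsc2 : (Real.sinh (hypDist B A)) ^ 2 = (mink A B) ^ 2 - 1 := by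
    rw [hscv, Real.sq_sqrt (by nlinarith)]; ring
  have hsa2 : (Real.sinh (hypDist B C)) ^ 2 = (mink B C) ^ 2 - 1 := by
    rw [hsav, Real.sq_sqrt (by nlinarith)]; ring
  have hscne : Real.sinh (hypDist B A) ≠ 0 := ne_of_gt hscpos
  have hsane : Real.sinh (hypDist B C) ≠ 0 := ne_of_gt hsapos
  have e1 := tangent_prod A B C hBm hCB hscne hsane
  have o1 : mink B (tangentDir B A) = 0 := tangent_orth A B hBm
  have o2 : mink B (tangentDir B C) = 0 := tangent_orth C B hBm
  -- the tangent directions are unit vectors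
  have u1 : mink (tangentDir B A) (tangentDir B A) = 1 := by
    have e := tangent_prod A B A hBm (mink_comm A B) hscne hscne
    have e' : (1:ℝ) * (Real.sinh (hypDist B A) * Real.sinh (hypDist B A)) =
        mink A A + mink A B * mink B A := by
      rw [hAm, hBA, one_mul]; linear_combination hsc2
    exact mul_right_cancel₀ (mul_ne_zero hscne hscne) (e.trans e'.symm)
  have u2 : mink (tangentDir B C) (tangentDir B C) = 1 := by
    have e := tangent_prod C B C hBm (mink_comm C B) hsane hsane
    have e' : (1:ℝ) * (Real.sinh (hypDist B C) * Real.sinh (hypDist B C)) =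
        mink C C + mink C B * mink B C := by
      rw [hCm, hCB, one_mul]; linear_combination hsa2
    exact mul_right_cancel₀ (mul_ne_zero hsane hsane) (e.trans e'.symm)
  -- Cauchy–Schwarz in the tangent space at B
  have hs2 := mink_cs hB o1 o2 u1 u2
  have hangle : hypAngle B A C =
      Real.arccos (mink (tangentDir B A) (tangentDir B C)) := rfl
  rw [hangle, Real.cos_arccos (by nlinarith) (by nlinarith)]
  rw [hcosha, hcoshc, hcoshb, hdAB, eq_div_iff (ne_of_gt (mul_pos hsapos hscpos))]
  linear_combination e1
end

section
/- Euclidean entailment cones are transitive: fix K > 0 and ε ≥ K, and define for x ∈ ℝⁿ with ‖x‖ ≥ ε the cone S_x = {y ∈ ℝⁿ : ‖y‖ ≥ ‖x‖ and Ξ(x,y) ≤ arcsin(K/‖x‖)} ∪ {x}, where cos Ξ(x,y) = ⟨y−x, x⟩/(‖y−x‖·‖x‖). If y ∈ S_x with y ≠ x, then ‖y‖ ≥ ε and S_y ⊆ S_x. -/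
/-!
Writing `a(x) = √(‖x‖² - K²)`, the angle condition `∠(z - x, x) ≤ arcsin (K / ‖x‖)` is, after
taking cosines, the linear-looking inequality `‖z - x‖ · a(x) ≤ ⟪z - x, x⟫`. If `y` satisfies it
for `x`, then `‖y‖² - K² ≥ (a(x) + ‖y - x‖)²`, i.e. `a` grows at least by the step length. For `z`
in the cone at `y`, splitting `⟪z - x, x⟫` along `x → y → z` and bounding the cross term
`⟪z - y, y - x⟫` by Cauchy–Schwarz leaves `a(x) (‖y - x‖ + ‖z - y‖) ≤ ⟪z - x, x⟫`, and the
triangle inequality finishes.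
-/

/-- The Euclidean entailment cone at `x` with parameter `K`:
all `y` with `‖y‖ ≥ ‖x‖` making an angle `Ξ(x,y) = ∠(y − x, x)` at most
`arcsin(K/‖x‖)` with the axis, together with the apex `x` itself. -/
noncomputable def euclCone {n : ℕ} (K : ℝ) (x : EuclideanSpace ℝ (Fin n)) :
    Set (EuclideanSpace ℝ (Fin n)) :=
  insert x {y | ‖x‖ ≤ ‖y‖ ∧
    InnerProductGeometry.angle (y - x) x ≤ Real.arcsin (K / ‖x‖)}

open Real InnerProductGeometry RealInnerProductSpace

theorem cos_arcsin_div (K : ℝ) {X : ℝ} (hX : 0 < X) :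
    cos (arcsin (K / X)) = √(X ^ 2 - K ^ 2) / X := by
  rw [cos_arcsin, ← sqrt_sq hX.le, ← sqrt_div' _ (sq_nonneg X), sqrt_sq hX.le]
  congr 1
  field_simp

section InnerProductSpace

variable {E : Type*} [NormedAddCommGroup E] [InnerProductSpace ℝ E]

theorem angle_le_arcsin_div_norm_iff {K : ℝ} (hK : 0 ≤ K) {u x : E} (hu : u ≠ 0)
    (hx : x ≠ 0) :
    angle u x ≤ arcsin (K / ‖x‖) ↔ ‖u‖ * √(‖x‖ ^ 2 - K ^ 2) ≤ ⟪u, x⟫ := by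
  have hu' : 0 < ‖u‖ := norm_pos_iff.mpr hu
  have hx' : 0 < ‖x‖ := norm_pos_iff.mpr hx
  have harcsin : arcsin (K / ‖x‖) ∈ Set.Icc 0 π :=
    ⟨arcsin_nonneg.mpr (by positivity),
      (arcsin_le_pi_div_two _).trans (by linarith [pi_pos])⟩
  rw [← strictAntiOn_cos.le_iff_ge harcsin ⟨angle_nonneg u x, angle_le_pi u x⟩, cos_angle,
    cos_arcsin_div K hx', ← div_div, div_le_div_iff_of_pos_right hx', le_div_iff₀ hu',
    mul_comm]

theorem sqrt_sq_sub_add_norm_sub_le {K : ℝ} {x y : E} (hKx : K ^ 2 ≤ ‖x‖ ^ 2)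
    (hxy : ‖y - x‖ * √(‖x‖ ^ 2 - K ^ 2) ≤ ⟪y - x, x⟫) :
    √(‖x‖ ^ 2 - K ^ 2) + ‖y - x‖ ≤ √(‖y‖ ^ 2 - K ^ 2) := by
  have hy : ‖y‖ ^ 2 = ‖x‖ ^ 2 + 2 * ⟪x, y - x⟫ + ‖y - x‖ ^ 2 := by
    rw [← norm_add_sq_real, add_sub_cancel]
  apply le_sqrt_of_sq_le
  rw [add_sq, sq_sqrt (sub_nonneg.mpr hKx), hy, real_inner_comm]
  linarith

theorem cone_inequality_trans {K : ℝ} {x y z : E} (hKx : K ^ 2 ≤ ‖x‖ ^ 2)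
    (hxy : ‖y - x‖ * √(‖x‖ ^ 2 - K ^ 2) ≤ ⟪y - x, x⟫)
    (hyz : ‖z - y‖ * √(‖y‖ ^ 2 - K ^ 2) ≤ ⟪z - y, y⟫) :
    ‖z - x‖ * √(‖x‖ ^ 2 - K ^ 2) ≤ ⟪z - x, x⟫ := by
  set a := √(‖x‖ ^ 2 - K ^ 2)
  have hgrow : a + ‖y - x‖ ≤ √(‖y‖ ^ 2 - K ^ 2) := sqrt_sq_sub_add_norm_sub_le hKx hxy
  have hsplit : ⟪z - x, x⟫ = ⟪y - x, x⟫ + ⟪z - y, y⟫ - ⟪z - y, y - x⟫ := by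
    simp only [inner_sub_left, inner_sub_right]
    ring
  have htri : ‖z - x‖ ≤ ‖y - x‖ + ‖z - y‖ :=
    (norm_sub_le_norm_sub_add_norm_sub z y x).trans_eq (add_comm _ _)
  calc ‖z - x‖ * a ≤ (‖y - x‖ + ‖z - y‖) * a := by gcongr
    _ = ‖y - x‖ * a + ‖z - y‖ * (a + ‖y - x‖) - ‖z - y‖ * ‖y - x‖ := by ring
    _ ≤ ⟪y - x, x⟫ + ⟪z - y, y⟫ - ⟪z - y, y - x⟫ := by
      gcongr ?_ + ?_ - ?_
      · exact (mul_le_mul_of_nonneg_left hgrow (norm_nonneg _)).trans hyz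
      · exact real_inner_le_norm _ _
    _ = ⟪z - x, x⟫ := hsplit.symm

end InnerProductSpace

theorem euclCone_eq_setOf_inner {n : ℕ} {K : ℝ} (hK : 0 ≤ K) {x : EuclideanSpace ℝ (Fin n)}
    (hx : x ≠ 0) :
    euclCone K x = {z | ‖x‖ ≤ ‖z‖ ∧ ‖z - x‖ * √(‖x‖ ^ 2 - K ^ 2) ≤ ⟪z - x, x⟫} := by
  ext z
  by_cases hzx : z = x
  · simp [euclCone, hzx]
  · simp [euclCone, hzx, angle_le_arcsin_div_norm_iff hK (sub_ne_zero.mpr hzx) hx]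

theorem euclidean_cone_transitivity_general {n : ℕ} (K ε : ℝ) (hK : 0 < K) (hεK : K ≤ ε)
    (x y : EuclideanSpace ℝ (Fin n)) (hx : ε ≤ ‖x‖)
    (hy : y ∈ euclCone K x) :
    ε ≤ ‖y‖ ∧ euclCone K y ⊆ euclCone K x := by
  have hKx : K ≤ ‖x‖ := hεK.trans hx
  have hx0 : x ≠ 0 := norm_pos_iff.mp (hK.trans_le hKx)
  rw [euclCone_eq_setOf_inner hK.le hx0] at hy ⊢
  have hy0 : y ≠ 0 := norm_pos_iff.mp ((hK.trans_le hKx).trans_le hy.1)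
  rw [euclCone_eq_setOf_inner hK.le hy0]
  exact ⟨hx.trans hy.1, fun z hz => ⟨hy.1.trans hz.1,
    cone_inequality_trans (pow_le_pow_left₀ hK.le hKx 2) hy.2 hz.2⟩⟩

theorem euclidean_cone_transitivity {n : ℕ} (K ε : ℝ) (hK : 0 < K) (hεK : K ≤ ε)
    (x y : EuclideanSpace ℝ (Fin n)) (hx : ε ≤ ‖x‖)
    (hy : y ∈ euclCone K x) (hyx : y ≠ x) :
    ε ≤ ‖y‖ ∧ euclCone K y ⊆ euclCone K x :=
  euclidean_cone_transitivity_general K ε hK hεK x y hx hy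
end
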